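/- arXiv:1403.1980 — 3 statements merged into one kernel-verified Lean document; each statement's English description precedes it below -/
import Mathlib

section
/- Fix $\varepsilon > 0$, $g : \mathbb{R}^d \to \mathbb{R}$ bounded, and $\tau \in \mathbb{R}^d$ a $\delta$-almost period of $g$ (i.e., $\sup_x |g(x+\tau) - g(x)| < \delta$). Let $\mathcal{I}$ be a translation-invariant operator ($\mathcal{I}(\phi(\cdot + \tau))(x) = \mathcal{I}(\phi)(x + \tau)$) satisfying the hypotheses (a) $\mathcal{I}(\phi + c) = \mathcal{I}(\phi) - \varepsilon c$ for constants $c$ and (b) the comparison principle. If $w$ solves $\mathcal{I}(w)(y) = g(y)$ for all $y$, then $\sup_y |w(y + \tau) - w(y)| \le \varepsilon^{-1} \delta$; i.e., $\tau$ is a $\delta$-almost period of $\varepsilon w$. -/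
section ComparisonEstimate

variable {X : Type*} {ε : ℝ} {I : (X → ℝ) → X → ℝ}

theorem le_add_inv_mul_of_forall_sub_le (hε : ε ≠ 0)
    (hconst : ∀ (φ : X → ℝ) (c : ℝ) (y : X), I (fun x => φ x + c) y = I φ y - ε * c)
    (hcomp : ∀ u v : X → ℝ, (∀ x, I v x ≤ I u x) → ∀ x, u x ≤ v x)
    {u v : X → ℝ} {δ : ℝ} (h : ∀ x, I v x - δ ≤ I u x) :
    ∀ x, u x ≤ v x + ε⁻¹ * δ :=
  hcomp u (fun x => v x + ε⁻¹ * δ) fun x => by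
    rw [hconst, mul_inv_cancel_left₀ hε]
    exact h x

theorem abs_sub_le_inv_mul_of_forall_abs_sub_le (hε : ε ≠ 0)
    (hconst : ∀ (φ : X → ℝ) (c : ℝ) (y : X), I (fun x => φ x + c) y = I φ y - ε * c)
    (hcomp : ∀ u v : X → ℝ, (∀ x, I v x ≤ I u x) → ∀ x, u x ≤ v x)
    {u v : X → ℝ} {δ : ℝ} (h : ∀ x, |I u x - I v x| ≤ δ) :
    ∀ x, |u x - v x| ≤ ε⁻¹ * δ := by
  intro x
  have hu := le_add_inv_mul_of_forall_sub_le hε hconst hcomp (u := u) (v := v) (δ := δ)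
    fun y => by linarith [(abs_sub_le_iff.1 (h y)).2]
  have hv := le_add_inv_mul_of_forall_sub_le hε hconst hcomp (u := v) (v := u) (δ := δ)
    fun y => by linarith [(abs_sub_le_iff.1 (h y)).1]
  exact abs_sub_le_iff.2 ⟨by linarith [hu x], by linarith [hv x]⟩

end ComparisonEstimate

theorem almost_period_of_data_is_almost_period_of_solution_general
    (d : ℕ) (ε δ : ℝ) (hε : 0 < ε)
    (g : EuclideanSpace ℝ (Fin d) → ℝ)
    (τ : EuclideanSpace ℝ (Fin d))
    (hτ : ∀ x, |g (x + τ) - g x| < δ)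
    (I : (EuclideanSpace ℝ (Fin d) → ℝ) → (EuclideanSpace ℝ (Fin d) → ℝ))
    (htrans : ∀ (φ : EuclideanSpace ℝ (Fin d) → ℝ) (z x : EuclideanSpace ℝ (Fin d)),
      I (fun y => φ (y + z)) x = I φ (x + z))
    (hconst : ∀ (φ : EuclideanSpace ℝ (Fin d) → ℝ) (c : ℝ) (y : EuclideanSpace ℝ (Fin d)),
      I (fun x => φ x + c) y = I φ y - ε * c)
    (hcomp : ∀ u v : EuclideanSpace ℝ (Fin d) → ℝ,
      (∀ x, I v x ≤ I u x) → ∀ x, u x ≤ v x)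
    (w : EuclideanSpace ℝ (Fin d) → ℝ)
    (hw : ∀ y, I w y = g y) :
    ∀ y, |w (y + τ) - w y| ≤ ε⁻¹ * δ := by
  have hshift : ∀ x, I (fun y => w (y + τ)) x = g (x + τ) := fun x => by rw [htrans, hw]
  refine abs_sub_le_inv_mul_of_forall_abs_sub_le hε.ne' hconst hcomp fun x => ?_
  rw [hshift, hw]
  exact (hτ x).le

/-- almost periods transfer from the data to the solution. If `τ`
is a `δ`-almost period of `g`, `𝓘` is translation invariant, satisfies
`𝓘(φ + c) = 𝓘(φ) - ε c` and the comparison principle, and `𝓘(w) = g`, then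
`sup_y |w(y + τ) - w(y)| ≤ ε⁻¹ δ`, i.e. `τ` is a `δ`-almost period of `ε w`. -/
theorem almost_period_of_data_is_almost_period_of_solution
    (d : ℕ) (ε δ : ℝ) (hε : 0 < ε) (hδ : 0 < δ)
    (g : EuclideanSpace ℝ (Fin d) → ℝ) (hgb : ∃ M, ∀ x, |g x| ≤ M)
    (τ : EuclideanSpace ℝ (Fin d))
    (hτ : ∀ x, |g (x + τ) - g x| < δ)
    (I : (EuclideanSpace ℝ (Fin d) → ℝ) → (EuclideanSpace ℝ (Fin d) → ℝ))
    (htrans : ∀ (φ : EuclideanSpace ℝ (Fin d) → ℝ) (z x : EuclideanSpace ℝ (Fin d)),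
      I (fun y => φ (y + z)) x = I φ (x + z))
    (hconst : ∀ (φ : EuclideanSpace ℝ (Fin d) → ℝ) (c : ℝ) (y : EuclideanSpace ℝ (Fin d)),
      I (fun x => φ x + c) y = I φ y - ε * c)
    (hcomp : ∀ u v : EuclideanSpace ℝ (Fin d) → ℝ,
      (∀ x, I v x ≤ I u x) → ∀ x, u x ≤ v x)
    (w : EuclideanSpace ℝ (Fin d) → ℝ) (hwb : ∃ M, ∀ x, |w x| ≤ M)
    (hw : ∀ y, I w y = g y) :
    ∀ y, |w (y + τ) - w y| ≤ ε⁻¹ * δ :=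
  almost_period_of_data_is_almost_period_of_solution_general d ε δ hε g τ hτ I htrans hconst hcomp w
    hw
end

section
/- Let $(w_\varepsilon)_{\varepsilon > 0}$ be a family of functions on $\mathbb{R}^d$ and suppose: (i) for every $\delta > 0$ there is $R_\delta > 0$ such that for every $z \in \mathbb{R}^d$ there exists $\tau$ with $z - \tau \in B_{R_\delta}(0)$ and $\sup_y |\varepsilon w_\varepsilon(y + \tau) - \varepsilon w_\varepsilon(y)| \le \delta$ for all $\varepsilon$; (ii) for every fixed $R > 0$, the oscillation of $y \mapsto \varepsilon w_\varepsilon(y)$ over $B_R(0)$ tends to $0$ as $\varepsilon \to 0^+$. Then $\sup_y |\varepsilon w_\varepsilon(y) - \varepsilon w_\varepsilon(0)| \to 0$ as $\varepsilon \to 0^+$. -/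
/-! Every point `y` lies within `R_δ` of a common almost period `τ`, so `ε w_ε y` differs from
`ε w_ε (y - τ)` by at most `δ` uniformly in `ε`, and `y - τ` lies in the fixed ball `B_{R_δ}(0)`,
where the oscillation of `ε w_ε` vanishes as `ε → 0⁺`. -/

open Metric

theorem abs_sub_le_of_almost_period_of_oscillation_le {E : Type*} [AddGroup E] {u : E → ℝ}
    {S : Set E} {τ y : E} {δ₁ δ₂ : ℝ} (hτ : ∀ x, |u (x + τ) - u x| ≤ δ₁) (hyτ : y - τ ∈ S)
    (h0 : 0 ∈ S) (hosc : ∀ x ∈ S, ∀ x' ∈ S, |u x - u x'| ≤ δ₂) :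
    |u y - u 0| ≤ δ₁ + δ₂ :=
  calc |u y - u 0| ≤ |u y - u (y - τ)| + |u (y - τ) - u 0| := abs_sub_le _ _ _
    _ ≤ δ₁ + δ₂ := add_le_add (by simpa using hτ (y - τ)) (hosc _ hyτ _ h0)

/-- abstract form of the Ishii-type flattening lemma: if the
rescaled family `ε w_ε` has relatively dense common almost periods (i), and its
oscillation on each fixed ball vanishes as `ε → 0⁺` (ii), then
`sup_y |ε w_ε(y) - ε w_ε(0)| → 0` as `ε → 0⁺`. -/
theorem flattening_from_almost_periods_and_vanishing_oscillation
    (d : ℕ) (w : ℝ → EuclideanSpace ℝ (Fin d) → ℝ)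
    (h_ap : ∀ δ > (0:ℝ), ∃ Rδ > (0:ℝ), ∀ z : EuclideanSpace ℝ (Fin d),
      ∃ τ : EuclideanSpace ℝ (Fin d), z - τ ∈ ball (0 : EuclideanSpace ℝ (Fin d)) Rδ ∧
        ∀ ε > (0:ℝ), ∀ y, |ε * w ε (y + τ) - ε * w ε y| ≤ δ)
    (h_osc : ∀ R > (0:ℝ), ∀ δ > (0:ℝ), ∃ ε₀ > (0:ℝ), ∀ ε, 0 < ε → ε < ε₀ →
      ∀ y y' : EuclideanSpace ℝ (Fin d), y ∈ ball 0 R → y' ∈ ball 0 R →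
        |ε * w ε y - ε * w ε y'| ≤ δ) :
    ∀ δ > (0:ℝ), ∃ ε₀ > (0:ℝ), ∀ ε, 0 < ε → ε < ε₀ →
      ∀ y, |ε * w ε y - ε * w ε 0| ≤ δ := by
  intro δ hδ
  obtain ⟨R, hR, hap⟩ := h_ap (δ / 2) (half_pos hδ)
  obtain ⟨ε₀, hε₀, hosc⟩ := h_osc R hR (δ / 2) (half_pos hδ)
  refine ⟨ε₀, hε₀, fun ε hε hεε₀ y => ?_⟩
  obtain ⟨τ, hyτ, hτ⟩ := hap y
  calc |ε * w ε y - ε * w ε 0| ≤ δ / 2 + δ / 2 :=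
        abs_sub_le_of_almost_period_of_oscillation_le (hτ ε hε) hyτ (mem_ball_self hR)
          fun x hx x' hx' => hosc ε hε hεε₀ x x' hx hx'
    _ = δ := add_halves δ
end

section
/- Let $r \ge 1$, $\delta > 0$, and suppose the operator $\mathcal{I}^r$ satisfies: (a) $\mathcal{I}^r(\phi + c)(x) = \mathcal{I}^r(\phi)(x) - r^{-1} c$ for constants $c$; (b) degenerate ellipticity: if $u \le w$ on $\mathbb{R}^d$ with $u(x_0) = w(x_0)$ then $\mathcal{I}^r(u)(x_0) \le \mathcal{I}^r(w)(x_0)$; (c) the extremal bound $\mathcal{I}^r(v + \psi)(x) - \mathcal{I}^r(v)(x) \le M^{r,+}(\psi)(x)$ for all suitable $v, \psi$, where $M^{r,+}$ is positively 1-homogeneous and satisfies $\|M^{r,+}(\phi_R)\|_\infty \le C R^{-1}$ for all $R \ge 1/2$. If $u, v$ are bounded with $\mathcal{I}^r(u)(x) \ge \mathcal{I}^r(v)(x)$ for all $x$, and all quantities are classically defined, then $u \le v$ on $\mathbb{R}^d$. -/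
/-!
Suppose `δ = sup (u - v) > 0`. Subtracting `2δ φ_R` with `R` large does not change `u - v` much
near a point where it is close to `δ`, but makes it nonpositive outside the ball of radius `R`, so
`u - v - 2δ φ_R` has a global maximum `z` with value at least `δ/2`. There `v + 2δ φ_R + const`
touches `u` from above, and ellipticity, the constants rule and the extremal bound give
`𝓘(u)(z) ≤ 𝓘(v)(z) + 2δ C R⁻¹ - r⁻¹ δ/2 < 𝓘(v)(z)` once `R > 4 C r`.
-/

/-- The rescaled localization function `φ_R(x) = |x/R|² / (1 + |x/R|²)`. -/
noncomputable def phiR {d : ℕ} (R : ℝ) (x : EuclideanSpace ℝ (Fin d)) : ℝ :=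
  ‖R⁻¹ • x‖ ^ 2 / (1 + ‖R⁻¹ • x‖ ^ 2)

section phiR

variable {d : ℕ} {R : ℝ}

theorem continuous_phiR (R : ℝ) : Continuous (phiR (d := d) R) :=
  Continuous.div (by fun_prop) (by fun_prop) fun _ ↦ by positivity

theorem norm_inv_smul_of_pos (hR : 0 < R) (x : EuclideanSpace ℝ (Fin d)) :
    ‖R⁻¹ • x‖ = ‖x‖ / R := by
  rw [norm_smul, Real.norm_of_nonneg (inv_pos.2 hR).le, inv_mul_eq_div]

theorem one_half_le_phiR (hR : 0 < R) {x : EuclideanSpace ℝ (Fin d)} (hx : R ≤ ‖x‖) :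
    1 / 2 ≤ phiR R x := by
  have h : 1 ≤ ‖R⁻¹ • x‖ := by rwa [norm_inv_smul_of_pos hR, one_le_div hR]
  rw [phiR, le_div_iff₀ (by positivity)]
  nlinarith

theorem phiR_le_one_eighth (hR : 0 < R) {x : EuclideanSpace ℝ (Fin d)} (hx : 4 * ‖x‖ ≤ R) :
    phiR R x ≤ 1 / 8 := by
  have h : ‖R⁻¹ • x‖ ≤ 1 / 4 := by
    rw [norm_inv_smul_of_pos hR, div_le_iff₀ hR]
    linarith
  calc phiR R x ≤ ‖R⁻¹ • x‖ ^ 2 :=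
        div_le_self (by positivity) (by nlinarith [norm_nonneg (R⁻¹ • x)])
    _ ≤ 1 / 8 := by nlinarith [norm_nonneg (R⁻¹ • x)]

theorem exists_max_sub_phiR {f : EuclideanSpace ℝ (Fin d) → ℝ} (hf : Continuous f) {δ : ℝ}
    (hfδ : ∀ x, f x ≤ δ) {x₁ : EuclideanSpace ℝ (Fin d)} (hx₁ : 3 * δ / 4 < f x₁)
    (hR : 0 < R) (hRx₁ : 4 * ‖x₁‖ ≤ R) :
    ∃ z, δ / 2 ≤ f z - 2 * δ * phiR R z ∧
      ∀ x, f x - 2 * δ * phiR R x ≤ f z - 2 * δ * phiR R z := by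
  set w := fun x ↦ f x - 2 * δ * phiR R x
  have hδ : 0 < δ := by linarith [hfδ x₁]
  have hwx₁ : δ / 2 ≤ w x₁ := by nlinarith [phiR_le_one_eighth hR hRx₁]
  have hw_far : ∀ᶠ x in Filter.cocompact _, w x ≤ w x₁ := by
    filter_upwards [(isCompact_closedBall 0 R).compl_mem_cocompact] with x hx
    rw [Set.mem_compl_iff, Metric.mem_closedBall, dist_zero_right, not_le] at hx
    nlinarith [one_half_le_phiR hR hx.le, hfδ x]
  obtain ⟨z, hz⟩ := (hf.sub (continuous_const.mul (continuous_phiR R))).exists_forall_ge' x₁ hw_far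
  exact ⟨z, hwx₁.trans (hz x₁), hz⟩

end phiR

section Operator

variable {X : Type*} {I M : (X → ℝ) → X → ℝ} {r : ℝ}

theorem apply_le_of_touches_from_above
    (hconst : ∀ φ c x, I (fun y ↦ φ y + c) x = I φ x - r⁻¹ * c)
    (hell : ∀ u w : X → ℝ, ∀ x₀, (∀ x, u x ≤ w x) → u x₀ = w x₀ → I u x₀ ≤ I w x₀)
    {u w : X → ℝ} {z : X} (hz : ∀ x, u x - w x ≤ u z - w z) :
    I u z ≤ I w z - r⁻¹ * (u z - w z) := by
  rw [← hconst]
  exact hell _ _ z (fun x ↦ by linarith [hz x]) (by ring)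

theorem apply_add_const_mul_le
    (hext : ∀ v ψ : X → ℝ, ∀ x, I (fun y ↦ v y + ψ y) x - I v x ≤ M ψ x)
    (hhom : ∀ c : ℝ, 0 < c → ∀ φ x, M (fun y ↦ c * φ y) x = c * M φ x)
    {c : ℝ} (hc : 0 < c) (v ψ : X → ℝ) (x : X) :
    I (fun y ↦ v y + c * ψ y) x ≤ I v x + c * M ψ x := by
  linarith [hext v (fun y ↦ c * ψ y) x, hhom c hc ψ x]

end Operator

theorem exists_forall_le_and_three_quarters_lt {X : Type*} {f : X → ℝ}
    (hf : BddAbove (Set.range f)) {x₀ : X} (hx₀ : 0 < f x₀) :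
    ∃ δ, (∀ x, f x ≤ δ) ∧ ∃ x₁, 3 * δ / 4 < f x₁ := by
  have hpos : 0 < sSup (Set.range f) := hx₀.trans_le (le_csSup hf ⟨x₀, rfl⟩)
  obtain ⟨_, ⟨x₁, rfl⟩, h⟩ := exists_lt_of_lt_csSup (Set.range_nonempty_iff_nonempty.2 ⟨x₀⟩)
    (show 3 * sSup (Set.range f) / 4 < sSup (Set.range f) by linarith)
  exact ⟨_, fun x ↦ le_csSup hf ⟨x, rfl⟩, x₁, h⟩

/-- comparison principle for smooth functions, abstract form:
if `𝓘^r` satisfies (a) the constants rule, (b) degenerate ellipticity (monotone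
under touching), and (c) the extremal bound by a positively 1-homogeneous `M⁺`
with `‖M⁺(φ_R)‖_∞ ≤ C R⁻¹` for `R ≥ 1/2`, then `𝓘^r(u) ≥ 𝓘^r(v)` pointwise
implies `u ≤ v` for bounded `u, v`. -/
theorem comparison_principle_for_smooth_functions
    (d : ℕ) (r : ℝ) (hr : 1 ≤ r)
    (I : (EuclideanSpace ℝ (Fin d) → ℝ) → (EuclideanSpace ℝ (Fin d) → ℝ))
    (Mplus : (EuclideanSpace ℝ (Fin d) → ℝ) → (EuclideanSpace ℝ (Fin d) → ℝ))
    (hconst : ∀ (φ : EuclideanSpace ℝ (Fin d) → ℝ) (c : ℝ) (x : EuclideanSpace ℝ (Fin d)),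
      I (fun y => φ y + c) x = I φ x - r⁻¹ * c)
    (hell : ∀ u w : EuclideanSpace ℝ (Fin d) → ℝ, ∀ x₀,
      (∀ x, u x ≤ w x) → u x₀ = w x₀ → I u x₀ ≤ I w x₀)
    (hext : ∀ v ψ : EuclideanSpace ℝ (Fin d) → ℝ, ∀ x,
      I (fun y => v y + ψ y) x - I v x ≤ Mplus ψ x)
    (hhom : ∀ (c : ℝ), 0 < c → ∀ (φ : EuclideanSpace ℝ (Fin d) → ℝ) (x : EuclideanSpace ℝ (Fin d)),
      Mplus (fun y => c * φ y) x = c * Mplus φ x)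
    (C : ℝ) (hC : 0 < C)
    (hMphi : ∀ R : ℝ, 1/2 ≤ R → ∀ x, |Mplus (phiR R) x| ≤ C * R⁻¹)
    (u v : EuclideanSpace ℝ (Fin d) → ℝ)
    (hu : Continuous u) (hv : Continuous v)
    (hub : ∃ M, ∀ x, |u x| ≤ M) (hvb : ∃ M, ∀ x, |v x| ≤ M)
    (hIuv : ∀ x, I v x ≤ I u x) :
    ∀ x, u x ≤ v x := by
  by_contra! ⟨x₀, hx₀⟩
  obtain ⟨Mu, hMu⟩ := hub
  obtain ⟨Mv, hMv⟩ := hvb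
  have hbdd : BddAbove (Set.range fun x ↦ u x - v x) :=
    ⟨Mu + Mv, by rintro _ ⟨x, rfl⟩; linarith [(abs_le.1 (hMu x)).2, (abs_le.1 (hMv x)).1]⟩
  obtain ⟨δ, hδ, x₁, hx₁⟩ := exists_forall_le_and_three_quarters_lt hbdd (sub_pos.2 hx₀)
  have hδpos : 0 < δ := by linarith [hδ x₁]
  set R := max (4 * ‖x₁‖) (4 * C * r + 1)
  have hCr : 0 < 4 * C * r := by positivity
  have hRCr : 4 * C * r + 1 ≤ R := le_max_right _ _
  have hR : 0 < R := by linarith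
  obtain ⟨z, hz, hzmax⟩ := exists_max_sub_phiR (f := fun x ↦ u x - v x) (hu.sub hv) hδ hx₁ hR
    (le_max_left _ _)
  have htouch := apply_le_of_touches_from_above hconst hell (u := u)
    (w := fun y ↦ v y + 2 * δ * phiR R y) (z := z) fun x ↦ by linarith [hzmax x]
  have hpert := apply_add_const_mul_le hext hhom (by positivity : 0 < 2 * δ) v (phiR R) z
  have hM := (abs_le.1 (hMphi R (by linarith) z)).2
  have hsmall : 2 * δ * (C * R⁻¹) < r⁻¹ * (δ / 2) := by
    field_simp
    nlinarith
  linarith [hIuv z, mul_le_mul_of_nonneg_left hz (inv_pos.2 (by linarith : 0 < r)).le,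
    mul_le_mul_of_nonneg_left hM (by positivity : (0 : ℝ) ≤ 2 * δ)]
end
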